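/- arXiv:2602.01214 — 3 statements merged into one kernel-verified Lean document; each statement's English description precedes it below -/
import Mathlib

section
/- Let p, k ∈ ℤ, m ≥ 1, j ≥ 1, and let α ∈ B_m^{p,k} with witnesses c_{p−h} ∈ M_{p−h,k−1−p+h} (0 ≤ h ≤ m−1) as in the definition of B_m^{p,k}. Define z_{p+i} := −∑_{h=0}^{m−1} d_{h+i} c_{p−h} for i ≥ 1. Then d_n α = ∑_{i=0}^{n−1} d_i z_{p+n−i} for every n ≥ 1 (so α, with these witnesses, lies in Z_l^{p,k} for every l ≥ 1), and moreover d_j α − ∑_{i=1}^{j−1} d_{j−i} z_{p+i} = −d_0(∑_{h=0}^{m−1} d_{h+j} c_{p−h}); in particular d_j α − ∑_{i=1}^{j−1} d_{j−i} z_{p+i} ∈ B_1^{p+j,k+1} = Im d_0 ∩ M_{p+j,k+1−p−j}. -/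
/-- `α ∈ Z_r^{p,k}` for the spectral sequence of a multicomplex. -/
def MemZ {R M : Type*} [CommRing R] [AddCommGroup M] [Module R M]
    (Mgr : ℤ × ℤ → Submodule R M) (D : ℕ → M →ₗ[R] M)
    (r : ℕ) (p k : ℤ) (α : M) : Prop :=
  α ∈ Mgr (p, k - p) ∧ D 0 α = 0 ∧
    ∃ z : ℕ → M,
      (∀ j : ℕ, 1 ≤ j → j ≤ r - 1 → z j ∈ Mgr (p + (j : ℤ), k - p - (j : ℤ))) ∧
      (∀ n : ℕ, 1 ≤ n → n ≤ r - 1 → D n α = ∑ i ∈ Finset.range n, D i (z (n - i)))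

/-- `α ∈ B_r^{p,k}` for the spectral sequence of a multicomplex. -/
def MemB {R M : Type*} [CommRing R] [AddCommGroup M] [Module R M]
    (Mgr : ℤ × ℤ → Submodule R M) (D : ℕ → M →ₗ[R] M)
    (r : ℕ) (p k : ℤ) (α : M) : Prop :=
  α ∈ Mgr (p, k - p) ∧
    ∃ c : ℕ → M,
      (∀ i : ℕ, i ≤ r - 1 → c i ∈ Mgr (p - (i : ℤ), k - 1 - p + (i : ℤ))) ∧
      α = ∑ i ∈ Finset.range r, D i (c i) ∧
      (∀ l : ℕ, 1 ≤ l → l ≤ r - 1 → ∑ i ∈ Finset.Icc l (r - 1), D (i - l) (c i) = 0)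


/-- For an `s`-multicomplex, let `α ∈ B_m^{p,k}` with witnesses `c_{p−h}` and set
`z_{p+i} := −∑_{h=0}^{m−1} d_{h+i} c_{p−h}`.  Then `d_n α = ∑_{i=0}^{n−1} d_i z_{p+n−i}`
for every `n ≥ 1` (so `α`, with these witnesses, lies in `Z_l^{p,k}` for every `l ≥ 1`),
and `d_j α − ∑_{i=1}^{j−1} d_{j−i} z_{p+i} = −d_0(∑_{h=0}^{m−1} d_{h+j} c_{p−h})`; in
particular `d_j α − ∑_{i=1}^{j−1} d_{j−i} z_{p+i} ∈ B_1^{p+j,k+1} = Im d_0 ∩ M_{p+j,k+1−p−j}`. -/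
theorem memB_with_canonical_witnesses_memZ
    {R M : Type*} [CommRing R] [AddCommGroup M] [Module R M]
    (Mgr : ℤ × ℤ → Submodule R M)
    (hinternal : DirectSum.IsInternal Mgr)
    (s : ℕ) (D : ℕ → M →ₗ[R] M)
    (hDvan : ∀ i : ℕ, s ≤ i → D i = 0)
    (hDdeg : ∀ (i : ℕ) (a b : ℤ), ∀ x ∈ Mgr (a, b), D i x ∈ Mgr (a + (i : ℤ), b + 1 - (i : ℤ)))
    (hDD : ∀ n : ℕ, ∑ i ∈ Finset.range (n + 1), D i ∘ₗ D (n - i) = 0)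
    (p k : ℤ) (m j : ℕ) (hm : 1 ≤ m) (hj : 1 ≤ j)
    (α : M) (c : ℕ → M)
    (hα : α ∈ Mgr (p, k - p))
    (hc : ∀ h : ℕ, h ≤ m - 1 → c h ∈ Mgr (p - (h : ℤ), k - 1 - p + (h : ℤ)))
    (hαsum : α = ∑ h ∈ Finset.range m, D h (c h))
    (hcrel : ∀ l : ℕ, 1 ≤ l → l ≤ m - 1 → ∑ h ∈ Finset.Icc l (m - 1), D (h - l) (c h) = 0)
    (z : ℕ → M) (hz : ∀ i : ℕ, z i = -∑ h ∈ Finset.range m, D (h + i) (c h)) :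
    (∀ n : ℕ, 1 ≤ n → D n α = ∑ i ∈ Finset.range n, D i (z (n - i))) ∧
    (∀ l : ℕ, 1 ≤ l → MemZ Mgr D l p k α) ∧
    (D j α - ∑ i ∈ Finset.Ico 1 j, D (j - i) (z i)
        = -(D 0 (∑ h ∈ Finset.range m, D (h + j) (c h)))) ∧
    MemB Mgr D 1 (p + (j : ℤ)) (k + 1) (D j α - ∑ i ∈ Finset.Ico 1 j, D (j - i) (z i)) ∧
    (D j α - ∑ i ∈ Finset.Ico 1 j, D (j - i) (z i))
      ∈ LinearMap.range (D 0) ⊓ Mgr (p + (j : ℤ), k + 1 - p - (j : ℤ)) := by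
  classical
  have hMgrEq : ∀ (a b a' b' : ℤ) (x : M), a = a' → b = b' → x ∈ Mgr (a, b) → x ∈ Mgr (a', b') := by
    rintro a b _ _ x rfl rfl h; exact h
  -- grading of z
  have hzgrade : ∀ i : ℕ, z i ∈ Mgr (p + (i : ℤ), k - p - (i : ℤ)) := by
    intro i
    rw [hz]
    refine Submodule.neg_mem _ (Submodule.sum_mem _ fun h hh => ?_)
    refine hMgrEq _ _ _ _ _ ?_ ?_
      (hDdeg (h + i) _ _ _ (hc h (by simp only [Finset.mem_range] at hh; omega)))
    · push_cast; ring
    · push_cast; ring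
  -- the key identity, for all n (including `n = 0`, which gives `D 0 α = 0`)
  have key : ∀ n : ℕ, D n α = ∑ i ∈ Finset.range n, D i (z (n - i)) := by
    intro n
    have hS : ∀ h : ℕ, ∑ i ∈ Finset.range (n + h + 1), D i (D (n + h - i) (c h)) = 0 := by
      intro h
      have h0 := hDD (n + h)
      have := LinearMap.congr_fun h0 (c h)
      simpa [LinearMap.sum_apply] using this
    have hsplit : ∀ h : ℕ,
        (∑ i ∈ Finset.range n, D i (D (n + h - i) (c h))) + D n (D h (c h))
          + ∑ l ∈ Finset.range h, D (n + 1 + l) (D (h - 1 - l) (c h)) = 0 := by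
      intro h
      have hSh := hS h
      have e0 : n + h + 1 = (n + 1) + h := by omega
      have e1 := Finset.sum_range_add (fun i => D i (D (n + h - i) (c h))) (n + 1) h
      rw [e0, e1, Finset.sum_range_succ] at hSh
      have e2 : ∀ l : ℕ, n + h - (n + 1 + l) = h - 1 - l := fun l => by omega
      have e3 : n + h - n = h := by omega
      simp only [e2, e3] at hSh
      linear_combination (norm := abel) hSh
    have hsum0 : (∑ h ∈ Finset.range m, ∑ i ∈ Finset.range n, D i (D (n + h - i) (c h)))
        + (∑ h ∈ Finset.range m, D n (D h (c h)))
        + ∑ h ∈ Finset.range m, ∑ l ∈ Finset.range h, D (n + 1 + l) (D (h - 1 - l) (c h)) = 0 := by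
      rw [← Finset.sum_add_distrib, ← Finset.sum_add_distrib]
      exact Finset.sum_eq_zero fun h _ => hsplit h
    have hT : ∑ h ∈ Finset.range m, ∑ l ∈ Finset.range h, D (n + 1 + l) (D (h - 1 - l) (c h))
        = 0 := by
      rw [Finset.sum_comm' (s' := fun l => Finset.Icc (l + 1) (m - 1))
        (t' := Finset.range (m - 1))
        (fun h l => by
          simp only [Finset.mem_range, Finset.mem_Icc]
          omega)]
      refine Finset.sum_eq_zero fun l hl => ?_
      have : ∑ h ∈ Finset.Icc (l + 1) (m - 1), D (h - 1 - l) (c h) = 0 := by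
        have := hcrel (l + 1) (by omega)
          (by simp only [Finset.mem_range] at hl; omega)
        rw [← this]
        exact Finset.sum_congr rfl fun h _ => by rw [show h - 1 - l = h - (l + 1) by omega]
      calc ∑ h ∈ Finset.Icc (l + 1) (m - 1), D (n + 1 + l) (D (h - 1 - l) (c h))
          = D (n + 1 + l) (∑ h ∈ Finset.Icc (l + 1) (m - 1), D (h - 1 - l) (c h)) := by
            rw [map_sum]
        _ = 0 := by rw [this, map_zero]
    have hDnα : D n α = ∑ h ∈ Finset.range m, D n (D h (c h)) := by rw [hαsum, map_sum]
    have hRHS : ∑ i ∈ Finset.range n, D i (z (n - i))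
        = -∑ h ∈ Finset.range m, ∑ i ∈ Finset.range n, D i (D (n + h - i) (c h)) := by
      rw [← Finset.sum_comm, ← Finset.sum_neg_distrib]
      refine Finset.sum_congr rfl fun i hi => ?_
      simp only [Finset.mem_range] at hi
      rw [hz, map_neg, map_sum, neg_inj]
      refine Finset.sum_congr rfl fun h _ => ?_
      rw [show h + (n - i) = n + h - i by omega]
    rw [hT, add_zero] at hsum0
    calc D n α = ∑ h ∈ Finset.range m, D n (D h (c h)) := hDnα
      _ = -∑ h ∈ Finset.range m, ∑ i ∈ Finset.range n, D i (D (n + h - i) (c h)) :=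
          eq_neg_of_add_eq_zero_right hsum0
      _ = ∑ i ∈ Finset.range n, D i (z (n - i)) := hRHS.symm
  have hD0 : D 0 α = 0 := by simpa using key 0
  -- the reindexed form of `key` at `n = j`
  have hreidx : ∑ i ∈ Finset.range j, D i (z (j - i)) = ∑ t ∈ Finset.Icc 1 j, D (j - t) (z t) := by
    refine Finset.sum_nbij' (fun i => j - i) (fun t => j - t) ?_ ?_ ?_ ?_ ?_ <;>
        intro a ha <;> simp only [Finset.mem_range, Finset.mem_Icc] at *
    · omega
    · omega
    · omega
    · omega
    · rw [show j - (j - a) = a by omega]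
  have hsplitj : D j α = (∑ i ∈ Finset.Ico 1 j, D (j - i) (z i)) + D 0 (z j) := by
    rw [key j, hreidx, show Finset.Icc 1 j = Finset.Ico 1 (j + 1) from rfl,
      Finset.sum_Ico_succ_top hj, Nat.sub_self]
  have hβ : D j α - ∑ i ∈ Finset.Ico 1 j, D (j - i) (z i) = D 0 (z j) := by
    rw [hsplitj]; abel
  have hβ' : D j α - ∑ i ∈ Finset.Ico 1 j, D (j - i) (z i)
      = -(D 0 (∑ h ∈ Finset.range m, D (h + j) (c h))) := by
    rw [hβ, hz, map_neg]
  have hβgrade : D 0 (z j) ∈ Mgr (p + (j : ℤ), k + 1 - p - (j : ℤ)) := by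
    refine hMgrEq _ _ _ _ _ ?_ ?_ (hDdeg 0 _ _ _ (hzgrade j))
    · push_cast; ring
    · push_cast; ring
  refine ⟨fun n _ => key n, ?_, hβ', ?_, ?_⟩
  · intro l _
    exact ⟨hα, hD0, z, fun i hi _ => hzgrade i, fun n _ _ => key n⟩
  · refine ⟨?_, fun _ => z j, ?_, ?_, ?_⟩
    · rw [hβ]
      refine hMgrEq _ _ _ _ _ rfl ?_ hβgrade
      ring
    · intro i hi
      interval_cases i
      refine hMgrEq _ _ _ _ _ ?_ ?_ (hzgrade j) <;> push_cast <;> ring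
    · rw [hβ]; simp
    · intro l hl hl'; omega
  · rw [hβ]
    exact ⟨⟨z j, rfl⟩, hβgrade⟩
end

section
/- Let p, k ∈ ℤ and j ≥ 1. For every α ∈ Z_j^{p,k} and every choice of witnesses z_{p+1}, …, z_{p+j−1} as in the definition of Z_j^{p,k}, the element d_j α − ∑_{i=1}^{j−1} d_{j−i} z_{p+i} belongs to B_{j+1}^{p+j,k+1}. -/
/-- For an `s`-multicomplex, if `α ∈ Z_j^{p,k}` with witnesses `z_{p+1}, …, z_{p+j−1}`, then
`d_j α − ∑_{i=1}^{j−1} d_{j−i} z_{p+i}` belongs to `B_{j+1}^{p+j,k+1}`. -/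
theorem image_of_memZ_mem_memB
    {R M : Type*} [CommRing R] [AddCommGroup M] [Module R M]
    (Mgr : ℤ × ℤ → Submodule R M)
    (hinternal : DirectSum.IsInternal Mgr)
    (s : ℕ) (D : ℕ → M →ₗ[R] M)
    (hDvan : ∀ i : ℕ, s ≤ i → D i = 0)
    (hDdeg : ∀ (i : ℕ) (a b : ℤ), ∀ x ∈ Mgr (a, b), D i x ∈ Mgr (a + (i : ℤ), b + 1 - (i : ℤ)))
    (hDD : ∀ n : ℕ, ∑ i ∈ Finset.range (n + 1), D i ∘ₗ D (n - i) = 0)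
    (p k : ℤ) (j : ℕ) (hj : 1 ≤ j) (α : M) (z : ℕ → M)
    (hα : α ∈ Mgr (p, k - p)) (hd0 : D 0 α = 0)
    (hz : ∀ i : ℕ, 1 ≤ i → i ≤ j - 1 → z i ∈ Mgr (p + (i : ℤ), k - p - (i : ℤ)))
    (hrel : ∀ n : ℕ, 1 ≤ n → n ≤ j - 1 → D n α = ∑ i ∈ Finset.range n, D i (z (n - i))) :
    MemB Mgr D (j + 1) (p + (j : ℤ)) (k + 1)
      (D j α - ∑ i ∈ Finset.Ico 1 j, D (j - i) (z i)) := by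
  classical
  have hij : ∀ i : ℕ, i < j → ((j - i : ℕ) : ℤ) = (j : ℤ) - i := by
    intro i hi; exact_mod_cast Nat.cast_sub hi.le
  -- reindexing lemma: sum over Ico 1 j of D (j-i) (z i) equals sum of D i (z (j-i))
  have hreindex : ∑ i ∈ Finset.Ico 1 j, D (j - i) (z i)
      = ∑ i ∈ Finset.Ico 1 j, D i (z (j - i)) := by
    refine Finset.sum_nbij' (fun i => j - i) (fun i => j - i) ?_ ?_ ?_ ?_ ?_
    · intro a ha; simp only [Finset.mem_Ico] at ha ⊢; omega
    · intro a ha; simp only [Finset.mem_Ico] at ha ⊢; omega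
    · intro a ha; simp only [Finset.mem_Ico] at ha
      show j - (j - a) = a; omega
    · intro a ha; simp only [Finset.mem_Ico] at ha
      show j - (j - a) = a; omega
    · intro a ha; simp only [Finset.mem_Ico] at ha
      show D (j - a) (z a) = D (j - a) (z (j - (j - a)))
      have e : j - (j - a) = a := by omega
      rw [e]
  set c : ℕ → M := fun i => if i = j then α else if i = 0 then 0 else -z (j - i) with hc
  have hci : ∀ i : ℕ, 1 ≤ i → i < j → c i = -z (j - i) := by
    intro i h1 h2
    simp only [hc]
    rw [if_neg (by omega), if_neg (by omega)]
  refine ⟨?_, c, ?_, ?_, ?_⟩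
  · apply sub_mem
    · have h := hDdeg j p (k - p) α hα
      convert h using 2 <;> ring
    · apply Submodule.sum_mem
      intro i hi
      rw [Finset.mem_Ico] at hi
      have h := hDdeg (j - i) (p + i) (k - p - i) (z i) (hz i hi.1 (by omega))
      rw [hij i hi.2] at h
      convert h using 2 <;> ring
  · intro i hi
    simp only [Nat.add_sub_cancel] at hi
    by_cases h : i = j
    · subst h
      simp only [hc, if_pos rfl]
      convert hα using 2 <;> ring
    · simp only [hc, if_neg h]
      by_cases h0 : i = 0
      · rw [if_pos h0]; exact Submodule.zero_mem _
      · rw [if_neg h0]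
        apply Submodule.neg_mem
        have hlt : i < j := lt_of_le_of_ne hi h
        have hm := hz (j - i) (by omega) (by omega)
        have hcast : ((j - i : ℕ) : ℤ) = (j : ℤ) - i := hij i hlt
        rw [hcast] at hm
        convert hm using 2 <;> ring
  · rw [Finset.sum_range_succ]
    have hcj : c j = α := by simp [hc]
    rw [hcj]
    have h0j : 0 < j := hj
    rw [Finset.range_eq_Ico, Finset.sum_eq_sum_Ico_succ_bot h0j]
    have hc0 : c 0 = 0 := by
      simp only [hc]; rw [if_neg (show (0 : ℕ) ≠ j by omega)]; simp
    rw [hc0, map_zero, zero_add]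
    have : ∑ i ∈ Finset.Ico 1 j, D i (c i)
        = -∑ i ∈ Finset.Ico 1 j, D i (z (j - i)) := by
      rw [← Finset.sum_neg_distrib]
      apply Finset.sum_congr rfl
      intro i hi
      rw [Finset.mem_Ico] at hi
      rw [hci i (by omega) (by omega), map_neg]
    rw [this, hreindex]
    abel
  · intro l hl1 hl2
    simp only [Nat.add_sub_cancel] at hl2 ⊢
    rw [← Finset.Ico_add_one_right_eq_Icc, Finset.sum_Ico_succ_top hl2]
    have hcj : c j = α := by simp [hc]
    rw [hcj]
    rcases eq_or_lt_of_le hl2 with heq | hlt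
    · subst heq
      simp [hd0]
    · have hsum : ∑ i ∈ Finset.Ico l j, D (i - l) (c i)
          = -∑ i ∈ Finset.Ico l j, D (i - l) (z (j - i)) := by
        rw [← Finset.sum_neg_distrib]
        apply Finset.sum_congr rfl
        intro i hi
        rw [Finset.mem_Ico] at hi
        rw [hci i (by omega) (by omega), map_neg]
      rw [hsum]
      have hrel' := hrel (j - l) (by omega) (by omega)
      have : ∑ i ∈ Finset.Ico l j, D (i - l) (z (j - i))
          = ∑ t ∈ Finset.range (j - l), D t (z (j - l - t)) := by
        rw [Finset.sum_Ico_eq_sum_range]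
        apply Finset.sum_congr rfl
        intro t ht
        rw [Finset.mem_range] at ht
        have e1 : l + t - l = t := by omega
        have e2 : j - (l + t) = j - l - t := by omega
        rw [e1, e2]
      rw [this, ← hrel']
      abel
end

section
/- For all p, k ∈ ℤ and all j, l ≥ 1, one has B_j^{p,k} ⊆ Z_l^{p,k}. -/
/-- For an `s`-multicomplex, `B_j^{p,k} ⊆ Z_l^{p,k}` for all `j, l ≥ 1`. -/
theorem memB_subset_memZ
    {R M : Type*} [CommRing R] [AddCommGroup M] [Module R M]
    (Mgr : ℤ × ℤ → Submodule R M)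
    (hinternal : DirectSum.IsInternal Mgr)
    (s : ℕ) (D : ℕ → M →ₗ[R] M)
    (hDvan : ∀ i : ℕ, s ≤ i → D i = 0)
    (hDdeg : ∀ (i : ℕ) (a b : ℤ), ∀ x ∈ Mgr (a, b), D i x ∈ Mgr (a + (i : ℤ), b + 1 - (i : ℤ)))
    (hDD : ∀ n : ℕ, ∑ i ∈ Finset.range (n + 1), D i ∘ₗ D (n - i) = 0)
    (p k : ℤ) (j l : ℕ) (hj : 1 ≤ j) (hl : 1 ≤ l) :
    ∀ α : M, MemB Mgr D j p k α → MemZ Mgr D l p k α := by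
  rintro α ⟨hα, c, hcdeg, hαeq, hc3⟩
  set w : ℕ → M := fun m => ∑ i ∈ Finset.range j, D (m + i) (c i) with hw_def
  -- vanishing of tails
  have htail : ∀ q : ℕ, ∑ i ∈ Finset.Ico (q + 1) j, D (i - 1 - q) (c i) = 0 := by
    intro q
    by_cases hq : q + 1 ≤ j - 1
    · have h := hc3 (q + 1) (Nat.le_add_left 1 q) hq
      have hIcc : Finset.Ico (q + 1) j = Finset.Icc (q + 1) (j - 1) := by
        ext x; simp only [Finset.mem_Ico, Finset.mem_Icc]; omega
      rw [hIcc, ← h]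
      apply Finset.sum_congr rfl
      intro x hx
      simp only [Finset.mem_Icc] at hx
      have hx1 : x - 1 - q = x - (q + 1) := by omega
      rw [hx1]
    · have he : Finset.Ico (q + 1) j = ∅ := Finset.Ico_eq_empty (by omega)
      simp [he]
  -- the multicomplex relation applied to c i, reflected
  have hrel : ∀ n i : ℕ, ∑ q ∈ Finset.range (n + i + 1), D (n + i - q) (D q (c i)) = 0 := by
    intro n i
    have h := LinearMap.congr_fun (hDD (n + i)) (c i)
    simp only [LinearMap.sum_apply, LinearMap.comp_apply, LinearMap.zero_apply] at h
    calc ∑ q ∈ Finset.range (n + i + 1), D (n + i - q) (D q (c i))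
        = ∑ q ∈ Finset.range (n + i + 1), D (n + i + 1 - 1 - q) (D q (c i)) := by
          apply Finset.sum_congr rfl; intro x _; congr 1
      _ = ∑ q ∈ Finset.range (n + i + 1), D q (D (n + i + 1 - 1 - q) (c i)) := by
          conv_rhs => rw [← Finset.sum_range_reflect
            (fun q => D q (D (n + i + 1 - 1 - q) (c i))) (n + i + 1)]
          apply Finset.sum_congr rfl
          intro x hx
          simp only [Finset.mem_range] at hx
          have h1 : n + i + 1 - 1 - (n + i + 1 - 1 - x) = x := by omega
          rw [h1]
      _ = ∑ q ∈ Finset.range (n + i + 1), D q (D (n + i - q) (c i)) := by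
          apply Finset.sum_congr rfl; intro x _; congr 2
      _ = 0 := h
  -- per-i reduction
  have step1 : ∀ n i : ℕ,
      ∑ m ∈ Finset.range (n + 1), D (n - m) (D (m + i) (c i))
        = -∑ q ∈ Finset.range i, D (n + i - q) (D q (c i)) := by
    intro n i
    have hsplit := Finset.sum_Ico_consecutive (fun q => D (n + i - q) (D q (c i)))
      (Nat.zero_le i) (by omega : i ≤ n + i + 1)
    have h1 : ∑ q ∈ Finset.Ico i (n + i + 1), D (n + i - q) (D q (c i))
        = ∑ m ∈ Finset.range (n + 1), D (n - m) (D (m + i) (c i)) := by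
      rw [Finset.sum_Ico_eq_sum_range]
      have he : n + i + 1 - i = n + 1 := by omega
      rw [he]
      apply Finset.sum_congr rfl
      intro m _
      have h2 : n + i - (i + m) = n - m := by omega
      have h3 : i + m = m + i := by omega
      rw [h2, h3]
    have h2 := hrel n i
    rw [Finset.range_eq_Ico] at h2
    rw [← hsplit] at h2
    simp only [← Finset.range_eq_Ico] at h2
    rw [← h1]
    exact eq_neg_of_add_eq_zero_right h2
  -- the key identity
  have key : ∀ n : ℕ, D n α + ∑ m ∈ Finset.Icc 1 n, D (n - m) (w m) = 0 := by
    intro n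
    have hswap : ∑ i ∈ Finset.range j, ∑ m ∈ Finset.range (n + 1),
        D (n - m) (D (m + i) (c i)) = 0 := by
      calc ∑ i ∈ Finset.range j, ∑ m ∈ Finset.range (n + 1), D (n - m) (D (m + i) (c i))
          = ∑ i ∈ Finset.range j, -∑ q ∈ Finset.range i, D (n + i - q) (D q (c i)) :=
            Finset.sum_congr rfl fun i _ => step1 n i
        _ = -∑ i ∈ Finset.range j, ∑ q ∈ Finset.range i, D (n + i - q) (D q (c i)) := by
            rw [Finset.sum_neg_distrib]
        _ = -∑ i ∈ Finset.range j, ∑ q ∈ Finset.range i, D (n + q + 1) (D (i - 1 - q) (c i)) := by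
            congr 1
            apply Finset.sum_congr rfl
            intro i _
            rw [← Finset.sum_range_reflect (fun q => D (n + i - q) (D q (c i))) i]
            apply Finset.sum_congr rfl
            intro q hq
            simp only [Finset.mem_range] at hq
            have h1 : n + i - (i - 1 - q) = n + q + 1 := by omega
            rw [h1]
        _ = -∑ q ∈ Finset.range j, ∑ i ∈ Finset.Ico (q + 1) j,
              D (n + q + 1) (D (i - 1 - q) (c i)) := by
            congr 1
            apply Finset.sum_comm'
            intro x y
            simp only [Finset.mem_range, Finset.mem_Ico]
            omega
        _ = 0 := by
            rw [neg_eq_zero]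
            apply Finset.sum_eq_zero
            intro q _
            rw [← map_sum, htail q, map_zero]
    have hswap2 : ∑ m ∈ Finset.range (n + 1), ∑ i ∈ Finset.range j,
        D (n - m) (D (m + i) (c i)) = 0 := by
      rw [Finset.sum_comm]; exact hswap
    have h0 : Finset.range (n + 1) = insert 0 (Finset.Icc 1 n) := by
      ext x; simp only [Finset.mem_range, Finset.mem_insert, Finset.mem_Icc]; omega
    rw [h0, Finset.sum_insert (by simp)] at hswap2
    have hα' : D n α = ∑ i ∈ Finset.range j, D (n - 0) (D (0 + i) (c i)) := by
      rw [hαeq, map_sum]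
      apply Finset.sum_congr rfl
      intro i _
      norm_num
    have hwm : ∀ m, D (n - m) (w m) = ∑ i ∈ Finset.range j, D (n - m) (D (m + i) (c i)) :=
      fun m => map_sum _ _ _
    rw [hα']
    simp only [hwm]
    exact hswap2
  refine ⟨hα, ?_, fun m => -(w m), ?_, ?_⟩
  · have h := key 0
    simpa using h
  · intro m hm1 hm2
    apply neg_mem
    apply Submodule.sum_mem
    intro i hi
    simp only [Finset.mem_range] at hi
    have hci := hcdeg i (by omega)
    have h := hDdeg (m + i) _ _ _ hci
    convert h using 2 <;> push_cast <;> ring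
  · intro n hn1 hn2
    have hk := key n
    have hre : ∑ m ∈ Finset.Icc 1 n, D (n - m) (w m)
        = ∑ i ∈ Finset.range n, D i (w (n - i)) := by
      rw [show Finset.Icc 1 n = Finset.Ico 1 (n + 1) from (Finset.Ico_add_one_right_eq_Icc 1 n).symm]
      rw [Finset.sum_Ico_eq_sum_range]
      have he : n + 1 - 1 = n := rfl
      rw [he]
      rw [← Finset.sum_range_reflect (fun t => D (n - (1 + t)) (w (1 + t))) n]
      apply Finset.sum_congr rfl
      intro i hi
      simp only [Finset.mem_range] at hi
      have h1 : n - (1 + (n - 1 - i)) = i := by omega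
      have h2 : 1 + (n - 1 - i) = n - i := by omega
      rw [h1, h2]
    have : ∑ i ∈ Finset.range n, D i (-(w (n - i)))
        = -∑ m ∈ Finset.Icc 1 n, D (n - m) (w m) := by
      rw [hre, ← Finset.sum_neg_distrib]
      apply Finset.sum_congr rfl
      intro i _
      rw [map_neg]
    rw [this]
    exact eq_neg_of_add_eq_zero_left hk
end
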